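/- arXiv:1401.2574 — 6 statements merged into one kernel-verified Lean document; each statement's English description precedes it below -/
import Mathlib

section
/- Let b be a nonzero complex number, C > 0, and S an unbounded subset of the complex plane such that Re(b·λ) < -C|λ| for all λ ∈ S. If φ ∈ L¹[0,1] is continuous at 0, then ∫₀¹ e^{bλt} φ(t) dt = (φ(0) + o(1))/(-bλ) as λ → ∞ with λ ∈ S. -/
/-!
Put `z = bλ`. On `S` we have `-Re z > C‖λ‖ → ∞` and `‖z‖ ≤ (‖b‖ / C) (-Re z)`, so `z → ∞` inside a
sector around the negative real axis. As `∫₀¹ e^{zt} dt = (e^z - 1) / z` and `e^z → 0`, it remains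
to show `z ∫₀¹ e^{zt} (φ t - φ 0) dt → 0`. Since `|e^{zt}| = e^{t Re z}` and `‖z‖ ≲ -Re z`, this
follows from the real statement `∫₀¹ r e^{-rt} g(t) dt → g(0+)` as `r → ∞`: the kernels `r e^{-rt}`
are peak functions at `0`.
-/

open Filter MeasureTheory Set Topology

theorem integral_mul_exp_neg_mul (r : ℝ) :
    ∫ t in (0:ℝ)..1, r * Real.exp (-(r * t)) = 1 - Real.exp (-r) := by
  have hderiv (t : ℝ) : HasDerivAt (fun t => -Real.exp (-(r * t))) (r * Real.exp (-(r * t))) t := by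
    have := (((hasDerivAt_id t).const_mul r).fun_neg.exp).fun_neg
    simpa [mul_comm] using this
  rw [intervalIntegral.integral_eq_sub_of_hasDerivAt (fun t _ => hderiv t)
    (by apply Continuous.intervalIntegrable; fun_prop)]
  simp only [mul_one, mul_zero, neg_zero, Real.exp_zero, sub_neg_eq_add]
  ring

theorem tendsto_mul_exp_neg_mul_atTop {δ : ℝ} (hδ : 0 < δ) :
    Tendsto (fun r : ℝ => r * Real.exp (-(r * δ))) atTop (𝓝 0) := by
  have := ((Real.tendsto_pow_mul_exp_neg_atTop_nhds_zero 1).comp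
    (tendsto_id.atTop_mul_const hδ)).div_const δ
  refine (this.congr fun r => ?_).trans (by simp)
  simp only [Function.comp, id, pow_one]
  field_simp

theorem tendstoUniformlyOn_mul_exp_neg_mul {δ : ℝ} (hδ : 0 < δ) :
    TendstoUniformlyOn (fun r t : ℝ => r * Real.exp (-(r * t))) 0 atTop (Ici δ) := by
  refine Metric.tendstoUniformlyOn_iff.2 fun ε hε => ?_
  filter_upwards [(tendsto_mul_exp_neg_mul_atTop hδ).eventually (gt_mem_nhds hε),
    eventually_ge_atTop 0] with r hr hr0 t (ht : δ ≤ t)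
  have : r * Real.exp (-(r * t)) ≤ r * Real.exp (-(r * δ)) := by gcongr
  rw [Pi.zero_apply, dist_zero_left, Real.norm_of_nonneg (by positivity)]
  exact this.trans_lt hr

theorem tendsto_integral_mul_exp_neg_mul_smul {E : Type*} [NormedAddCommGroup E] [NormedSpace ℝ E]
    [CompleteSpace E] {g : ℝ → E} {a : E}
    (hg : IntervalIntegrable g volume 0 1) (hga : Tendsto g (𝓝[>] 0) (𝓝 a)) :
    Tendsto (fun r : ℝ => ∫ t in (0:ℝ)..1, (r * Real.exp (-(r * t))) • g t) atTop (𝓝 a) := by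
  simp only [intervalIntegral.integral_of_le zero_le_one]
  refine tendsto_setIntegral_peak_smul_of_integrableOn_of_tendsto (x₀ := 0) measurableSet_Ioc
    measurableSet_Ioc subset_rfl self_mem_nhdsWithin measure_Ioc_lt_top.ne ?_ ?_ ?_ ?_ hg.1
    (by rwa [nhdsWithin_Ioc_eq_nhdsGT zero_lt_one])
  · filter_upwards [eventually_ge_atTop 0] with r hr t _ using by positivity
  · intro u hu h0u
    obtain ⟨δ, hδ, hball⟩ := Metric.isOpen_iff.1 hu 0 h0u
    refine (tendstoUniformlyOn_mul_exp_neg_mul hδ).mono fun t ht => ?_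
    by_contra! htδ
    exact ht.2 (hball (by simpa [abs_of_pos ht.1.1] using htδ))
  · have h1 : Tendsto (fun r : ℝ => 1 - Real.exp (-r)) atTop (𝓝 1) := by
      simpa using tendsto_const_nhds.sub (Real.tendsto_exp_atBot.comp tendsto_neg_atTop_atBot)
    refine h1.congr fun r => ?_
    rw [← intervalIntegral.integral_of_le zero_le_one, integral_mul_exp_neg_mul]
  · exact Eventually.of_forall fun r => by fun_prop

theorem norm_integral_exp_mul_mul_le (z : ℂ) (ψ : ℝ → ℂ) :
    ‖∫ t in (0:ℝ)..1, Complex.exp (z * t) * ψ t‖ ≤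
      ∫ t in (0:ℝ)..1, Real.exp (z.re * t) * ‖ψ t‖ := by
  refine (intervalIntegral.norm_integral_le_integral_norm zero_le_one).trans_eq ?_
  simp [Complex.norm_exp]

theorem tendsto_neg_mul_integral_exp_mul {L : Filter ℂ} {K : ℝ}
    (hre : Tendsto (fun z : ℂ => -z.re) L atTop) (hK : ∀ᶠ z in L, ‖z‖ ≤ K * -z.re)
    {φ : ℝ → ℂ} (hφ : IntervalIntegrable φ volume 0 1)
    (hφ0 : ContinuousWithinAt φ (Icc 0 1) 0) :
    Tendsto (fun z : ℂ => -z * ∫ t in (0:ℝ)..1, Complex.exp (z * t) * φ t) L (𝓝 (φ 0)) := by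
  have hexp_cont (z : ℂ) : Continuous fun t : ℝ => Complex.exp (z * t) := by fun_prop
  have hsplit (z : ℂ) (hz : z ≠ 0) :
      -z * ∫ t in (0:ℝ)..1, Complex.exp (z * t) * φ t =
        -z * (∫ t in (0:ℝ)..1, Complex.exp (z * t) * (φ t - φ 0)) + φ 0 * (1 - Complex.exp z) := by
    simp only [mul_sub]
    rw [intervalIntegral.integral_sub (hφ.continuousOn_mul (hexp_cont z).continuousOn)
      (((hexp_cont z).intervalIntegrable 0 1).mul_const _), intervalIntegral.integral_mul_const,
      integral_exp_mul_complex hz]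
    field_simp
    simp only [Complex.ofReal_one, mul_one, Complex.ofReal_zero, mul_zero, Complex.exp_zero,
      neg_sub]
    ring
  have hexp : Tendsto Complex.exp L (𝓝 0) :=
    Complex.tendsto_exp_comap_re_atBot.comp <| tendsto_comap_iff.2 <| by
      simpa [Function.comp_def] using tendsto_neg_atTop_atBot.comp hre
  have hψ : Tendsto (fun t => ‖φ t - φ 0‖) (𝓝[>] 0) (𝓝 0) := by
    have := ((hφ0.tendsto.sub_const (φ 0)).norm).mono_left
      (nhdsWithin_le_of_mem (Icc_mem_nhdsGT zero_lt_one))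
    simpa using this
  have hrem : Tendsto (fun z : ℂ => -z * ∫ t in (0:ℝ)..1, Complex.exp (z * t) * (φ t - φ 0))
      L (𝓝 0) := by
    rw [tendsto_zero_iff_norm_tendsto_zero]
    have hlim : Tendsto (fun z : ℂ =>
        K * ∫ t in (0:ℝ)..1, (-z.re * Real.exp (-(-z.re * t))) • ‖φ t - φ 0‖) L (𝓝 0) := by
      simpa using ((tendsto_integral_mul_exp_neg_mul_smul (hφ.sub intervalIntegrable_const).norm
        hψ).comp hre).const_mul K
    refine squeeze_zero' (Eventually.of_forall fun z => norm_nonneg _) ?_ hlim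
    filter_upwards [hK] with z hz
    calc ‖-z * ∫ t in (0:ℝ)..1, Complex.exp (z * t) * (φ t - φ 0)‖
        ≤ K * -z.re * ∫ t in (0:ℝ)..1, Real.exp (z.re * t) * ‖φ t - φ 0‖ := by
          rw [norm_mul, norm_neg]
          exact mul_le_mul hz (norm_integral_exp_mul_mul_le _ _) (norm_nonneg _)
            ((norm_nonneg z).trans hz)
      _ = K * ∫ t in (0:ℝ)..1, (-z.re * Real.exp (-(-z.re * t))) • ‖φ t - φ 0‖ := by
          rw [mul_assoc, ← intervalIntegral.integral_const_mul]
          simp [mul_assoc]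
  have hz : ∀ᶠ z in L, z ≠ 0 := by
    filter_upwards [hre.eventually_gt_atTop 0] with z hz h
    simp [h] at hz
  simpa using (hrem.add (tendsto_const_nhds.mul (tendsto_const_nhds.sub hexp))).congr'
    (hz.mono fun z hz => (hsplit z hz).symm)

theorem stmt0_general (b : ℂ) (C : ℝ) (hC : 0 < C)
    (S : Set ℂ)
    (hRe : ∀ l ∈ S, (b * l).re < -C * ‖l‖)
    (φ : ℝ → ℂ)
    (hφ : IntervalIntegrable φ MeasureTheory.volume 0 1)
    (hφ0 : ContinuousWithinAt φ (Set.Icc 0 1) 0) :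
    Tendsto (fun l : ℂ => (-(b * l)) * ∫ t in (0:ℝ)..1, Complex.exp (b * l * t) * φ t)
      ((Filter.comap (fun z : ℂ => ‖z‖) Filter.atTop) ⊓ Filter.principal S)
      (nhds (φ 0)) := by
  set L := comap (fun z : ℂ => ‖z‖) atTop ⊓ 𝓟 S
  have hsector : ∀ᶠ l in L, C * ‖l‖ ≤ -(b * l).re :=
    eventually_inf_principal.2 <| Eventually.of_forall fun l hl => by linarith [hRe l hl]
  have hnorm : Tendsto (fun l : ℂ => C * ‖l‖) L atTop :=
    (tendsto_comap.const_mul_atTop hC).mono_left inf_le_left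
  refine (tendsto_neg_mul_integral_exp_mul (L := map (b * ·) L) (K := ‖b‖ / C) ?_ ?_ hφ hφ0).comp
    tendsto_map
  · exact tendsto_map'_iff.2 (tendsto_atTop_mono' L hsector hnorm)
  · rw [eventually_map]
    filter_upwards [hsector] with l hl
    rw [norm_mul, div_mul_eq_mul_div, le_div_iff₀ hC]
    nlinarith [norm_nonneg b]

/-- Lemma `lem:int.e.q`(i): if `Re(b·λ) < -C|λ|` on an unbounded set `S`
and `φ ∈ L¹[0,1]` is continuous at `0`, then
`∫₀¹ e^{bλt} φ(t) dt = (φ(0) + o(1))/(-bλ)` as `λ → ∞`, `λ ∈ S`; equivalently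
`(-bλ)·∫₀¹ e^{bλt} φ(t) dt → φ(0)`. -/
theorem stmt0 (b : ℂ) (hb : b ≠ 0) (C : ℝ) (hC : 0 < C)
    (S : Set ℂ) (hS : ∀ R : ℝ, ∃ l ∈ S, R < ‖l‖)
    (hRe : ∀ l ∈ S, (b * l).re < -C * ‖l‖)
    (φ : ℝ → ℂ)
    (hφ : IntervalIntegrable φ MeasureTheory.volume 0 1)
    (hφ0 : ContinuousWithinAt φ (Set.Icc 0 1) 0) :
    Tendsto (fun l : ℂ => (-(b * l)) * ∫ t in (0:ℝ)..1, Complex.exp (b * l * t) * φ t)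
      ((Filter.comap (fun z : ℂ => ‖z‖) Filter.atTop) ⊓ Filter.principal S)
      (nhds (φ 0)) :=
  stmt0_general b C hC S hRe φ hφ hφ0
end

section
/- Let b be a nonzero complex number, C > 0, and S an unbounded subset of the complex plane such that Re(b·λ) < -C|λ| for all λ ∈ S. If φ ∈ L¹[0,1] is bounded in a neighborhood of 0, then ∫₀¹ |e^{bλt} φ(t)| dt = O(|λ|^{-1}) as λ → ∞ with λ ∈ S. -/
open Filter MeasureTheory

/-!
Write `a = C‖λ‖`, so that `‖e^{bλt}‖ ≤ e^{-at}` for `t ≥ 0`. Split `[0,1]` at a point `δ` below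
which `|φ| ≤ K`. On `[0,δ]` the integral is at most `K ∫₀^∞ e^{-at} dt = K/a`; on `[δ,1]` it is at
most `e^{-aδ} ‖φ‖₁ ≤ ‖φ‖₁/(aδ)`. Both are `O(1/‖λ‖)`.
-/

lemma norm_cexp_mul_ofReal_le {z : ℂ} {a t : ℝ} (hz : z.re ≤ -a) (ht : 0 ≤ t) :
    ‖Complex.exp (z * t)‖ ≤ Real.exp (-(a * t)) := by
  rw [Complex.norm_exp, Complex.re_mul_ofReal, Real.exp_le_exp]
  nlinarith

lemma Real.exp_neg_le_inv {x : ℝ} (hx : 0 < x) : Real.exp (-x) ≤ x⁻¹ := by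
  rw [Real.exp_neg]
  exact inv_anti₀ hx ((le_add_of_nonneg_right zero_le_one).trans (Real.add_one_le_exp x))

section

variable {z : ℂ} {a : ℝ} {φ : ℝ → ℂ}

lemma integral_norm_cexp_mul_le_of_norm_le {δ K : ℝ} (hz : z.re ≤ -a) (ha : 0 < a)
    (hδ : 0 ≤ δ) (hK : ∀ t ∈ Set.Icc 0 δ, ‖φ t‖ ≤ K) (hφ : IntervalIntegrable φ volume 0 δ) :
    ∫ t in (0:ℝ)..δ, ‖Complex.exp (z * t) * φ t‖ ≤ K / a := by
  have hK₀ : 0 ≤ K := (norm_nonneg _).trans (hK 0 ⟨le_rfl, hδ⟩)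
  have hexp_int : ∫ t in (0:ℝ)..δ, Real.exp (-(a * t)) ≤ 1 / a := by
    simpa using intervalIntegral_pow_mul_exp_neg_le (k := 0) hδ ha
  calc ∫ t in (0:ℝ)..δ, ‖Complex.exp (z * t) * φ t‖
      ≤ ∫ t in (0:ℝ)..δ, K * Real.exp (-(a * t)) := by
        refine intervalIntegral.integral_mono_on hδ
          ((hφ.continuousOn_mul (by fun_prop)).norm)
          (Continuous.intervalIntegrable (by fun_prop) _ _) fun t ht => ?_
        rw [norm_mul, mul_comm K]
        exact mul_le_mul (norm_cexp_mul_ofReal_le hz ht.1) (hK t ht) (norm_nonneg _)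
          (Real.exp_pos _).le
    _ = K * ∫ t in (0:ℝ)..δ, Real.exp (-(a * t)) := intervalIntegral.integral_const_mul _ _
    _ ≤ K / a := by
        simpa [div_eq_mul_inv] using mul_le_mul_of_nonneg_left hexp_int hK₀

lemma integral_norm_cexp_mul_le_exp_mul {δ c : ℝ} (hz : z.re ≤ -a) (ha : 0 ≤ a)
    (hδ : 0 ≤ δ) (hδc : δ ≤ c) (hφ : IntervalIntegrable φ volume δ c) :
    ∫ t in δ..c, ‖Complex.exp (z * t) * φ t‖
      ≤ Real.exp (-(a * δ)) * ∫ t in δ..c, ‖φ t‖ := by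
  rw [← intervalIntegral.integral_const_mul]
  refine intervalIntegral.integral_mono_on hδc ((hφ.continuousOn_mul (by fun_prop)).norm)
    (hφ.norm.const_mul _) fun t ht => ?_
  rw [norm_mul]
  refine mul_le_mul_of_nonneg_right ?_ (norm_nonneg _)
  calc ‖Complex.exp (z * t)‖ ≤ Real.exp (-(a * t)) := norm_cexp_mul_ofReal_le hz (hδ.trans ht.1)
    _ ≤ Real.exp (-(a * δ)) := Real.exp_le_exp.mpr (by nlinarith [ht.1])

theorem integral_norm_cexp_mul_le {δ K : ℝ} (hz : z.re ≤ -a) (ha : 0 < a)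
    (hδ : 0 < δ) (hδ₁ : δ ≤ 1) (hK : ∀ t ∈ Set.Icc 0 δ, ‖φ t‖ ≤ K)
    (hφ : IntervalIntegrable φ volume 0 1) :
    ∫ t in (0:ℝ)..1, ‖Complex.exp (z * t) * φ t‖
      ≤ K / a + (∫ t in (0:ℝ)..1, ‖φ t‖) / (a * δ) := by
  have hφ₀ : IntervalIntegrable φ volume 0 δ :=
    hφ.mono_set (Set.uIcc_subset_uIcc_left (by simp [hδ.le, hδ₁]))
  have hφ₁ : IntervalIntegrable φ volume δ 1 :=
    hφ.mono_set (Set.uIcc_subset_uIcc_right (by simp [hδ.le, hδ₁]))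
  have hf : ∀ {u v : ℝ}, IntervalIntegrable φ volume u v →
      IntervalIntegrable (fun t : ℝ => ‖Complex.exp (z * t) * φ t‖) volume u v :=
    fun h => (h.continuousOn_mul (by fun_prop)).norm
  have htail : ∫ t in δ..1, ‖φ t‖ ≤ ∫ t in (0:ℝ)..1, ‖φ t‖ := by
    rw [← intervalIntegral.integral_add_adjacent_intervals hφ₀.norm hφ₁.norm]
    linarith [intervalIntegral.integral_nonneg (μ := volume) hδ.le fun t _ => norm_nonneg (φ t)]
  have hexp : Real.exp (-(a * δ)) ≤ (a * δ)⁻¹ := Real.exp_neg_le_inv (mul_pos ha hδ)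
  rw [← intervalIntegral.integral_add_adjacent_intervals (hf hφ₀) (hf hφ₁)]
  gcongr
  · exact integral_norm_cexp_mul_le_of_norm_le hz ha hδ.le hK hφ₀
  · calc ∫ t in δ..1, ‖Complex.exp (z * t) * φ t‖
        ≤ Real.exp (-(a * δ)) * ∫ t in δ..1, ‖φ t‖ :=
          integral_norm_cexp_mul_le_exp_mul hz ha.le hδ.le hδ₁ hφ₁
      _ ≤ (a * δ)⁻¹ * ∫ t in (0:ℝ)..1, ‖φ t‖ := by
          gcongr
          exact intervalIntegral.integral_nonneg hδ₁ fun t _ => norm_nonneg _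
      _ = (∫ t in (0:ℝ)..1, ‖φ t‖) / (a * δ) := by ring

end

theorem stmt1_general (b : ℂ) (C : ℝ) (hC : 0 < C)
    (S : Set ℂ)
    (hRe : ∀ l ∈ S, (b * l).re < -C * ‖l‖)
    (φ : ℝ → ℂ)
    (hφ : IntervalIntegrable φ MeasureTheory.volume 0 1)
    (hbd : ∃ δ > (0:ℝ), ∃ K : ℝ, ∀ t ∈ Set.Icc (0:ℝ) δ, ‖φ t‖ ≤ K) :
    ∃ M > (0:ℝ), ∃ R > (0:ℝ), ∀ l ∈ S, R < ‖l‖ →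
      (∫ t in (0:ℝ)..1, ‖Complex.exp (b * l * t) * φ t‖) ≤ M / ‖l‖ := by
  obtain ⟨δ₀, hδ₀, K, hK⟩ := hbd
  set δ := min δ₀ 1
  set I := ∫ t in (0:ℝ)..1, ‖φ t‖
  refine ⟨max 1 (K / C + I / (C * δ)), by positivity, 1, one_pos, fun l hl hl₁ => ?_⟩
  have hl₀ : 0 < ‖l‖ := one_pos.trans hl₁
  calc ∫ t in (0:ℝ)..1, ‖Complex.exp (b * l * t) * φ t‖
      ≤ K / (C * ‖l‖) + I / (C * ‖l‖ * δ) :=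
        integral_norm_cexp_mul_le (by linarith [hRe l hl]) (by positivity)
          (lt_min hδ₀ one_pos) (min_le_right _ _)
          (fun t ht => hK t ⟨ht.1, ht.2.trans (min_le_left _ _)⟩) hφ
    _ = (K / C + I / (C * δ)) / ‖l‖ := by ring
    _ ≤ max 1 (K / C + I / (C * δ)) / ‖l‖ := by gcongr; exact le_max_right _ _

/-- Lemma `lem:int.e.q`(ii): if `Re(b·λ) < -C|λ|` on an unbounded set `S`
and `φ ∈ L¹[0,1]` is bounded near `0`, then `∫₀¹ |e^{bλt} φ(t)| dt = O(|λ|⁻¹)` as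
`λ → ∞`, `λ ∈ S`. -/
theorem stmt1 (b : ℂ) (hb : b ≠ 0) (C : ℝ) (hC : 0 < C)
    (S : Set ℂ) (hS : ∀ R : ℝ, ∃ l ∈ S, R < ‖l‖)
    (hRe : ∀ l ∈ S, (b * l).re < -C * ‖l‖)
    (φ : ℝ → ℂ)
    (hφ : IntervalIntegrable φ MeasureTheory.volume 0 1)
    (hbd : ∃ δ > (0:ℝ), ∃ K : ℝ, ∀ t ∈ Set.Icc (0:ℝ) δ, ‖φ t‖ ≤ K) :
    ∃ M > (0:ℝ), ∃ R > (0:ℝ), ∀ l ∈ S, R < ‖l‖ →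
      (∫ t in (0:ℝ)..1, ‖Complex.exp (b * l * t) * φ t‖) ≤ M / ‖l‖ :=
  stmt1_general b C hC S hRe φ hφ hbd
end

section
/- Let B = B* be an invertible selfadjoint diagonal n×n matrix, and C, D ∈ ℂ^{n×n} with rank(C D) = n. Let P₊, P₋ be the spectral projections onto the positive and negative parts of the spectrum of B. If C B C* - D B D* ≥ 0 (positive semidefinite), then the matrix T₋ = C P₊ + D P₋ is invertible. -/
open Matrix
open scoped ComplexOrder

/-!
If `T₋ᴴ y = 0`, then `u = Cᴴ y` vanishes where `b > 0` and `w = Dᴴ y` vanishes where `b < 0`.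
Hence `⟪y, (C B Cᴴ - D B Dᴴ) y⟫ = ∑ j, b j * (|u j|² - |w j|²)` is a sum of nonpositive terms;
being nonnegative, every term vanishes, so `u = w = 0`. Thus `y` lies in the kernel of
`(fromCols C D)ᴴ`, which is trivial because `fromCols C D` has full rank `n`.
-/

theorem forall_eq_zero_of_sum_mul_sub_nonneg {ι : Type*} [Fintype ι] {b x z : ι → ℝ}
    (hb : ∀ j, b j ≠ 0) (hx : ∀ j, 0 ≤ x j) (hz : ∀ j, 0 ≤ z j)
    (hx_pos : ∀ j, 0 < b j → x j = 0) (hz_neg : ∀ j, b j < 0 → z j = 0)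
    (hsum : 0 ≤ ∑ j, b j * (x j - z j)) (j : ι) : x j = 0 ∧ z j = 0 := by
  have hterm : ∀ i ∈ Finset.univ, b i * (x i - z i) ≤ 0 := by
    intro i _
    rcases (hb i).lt_or_gt with hi | hi
    · rw [hz_neg i hi, sub_zero]
      exact mul_nonpos_of_nonpos_of_nonneg hi.le (hx i)
    · rw [hx_pos i hi, zero_sub]
      exact mul_nonpos_of_nonneg_of_nonpos hi.le (neg_nonpos.2 (hz i))
  have hxz : x j = z j := by
    have := (Finset.sum_eq_zero_iff_of_nonpos hterm).1
      (le_antisymm (Finset.sum_nonpos hterm) hsum) j (Finset.mem_univ j)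
    exact sub_eq_zero.1 ((mul_eq_zero.1 this).resolve_left (hb j))
  rcases (hb j).lt_or_gt with hj | hj
  · exact ⟨hxz.trans (hz_neg j hj), hz_neg j hj⟩
  · exact ⟨hx_pos j hj, hxz ▸ hx_pos j hj⟩

namespace Matrix

variable {m n : Type*} [Fintype n]

theorem ker_mulVecLin_eq_bot_of_rank_eq_card {K : Type*} [Field K] {A : Matrix m n K}
    (hA : A.rank = Fintype.card n) : LinearMap.ker A.mulVecLin = ⊥ := by
  have h := LinearMap.finrank_range_add_finrank_ker A.mulVecLin
  rw [← rank, hA, Module.finrank_fintype_fun_eq_card, Nat.add_eq_left] at h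
  exact Submodule.finrank_eq_zero.1 h

variable [Fintype m] [DecidableEq n]

theorem conjTranspose_mul_diagonal_add_mul_diagonal_mulVec {R : Type*} [CommRing R] [StarRing R]
    (C D : Matrix m n R) (p q : n → R) (y : m → R) :
    (C * diagonal p + D * diagonal q)ᴴ *ᵥ y
      = fun j => star (p j) * (Cᴴ *ᵥ y) j + star (q j) * (Dᴴ *ᵥ y) j := by
  ext j
  simp [conjTranspose_add, conjTranspose_mul, add_mulVec, ← mulVec_mulVec, mulVec_diagonal]

theorem dotProduct_mul_diagonal_mul_conjTranspose_mulVec (C : Matrix m n ℂ) (b : n → ℝ)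
    (y : m → ℂ) :
    star y ⬝ᵥ (C * diagonal (fun j => (b j : ℂ)) * Cᴴ) *ᵥ y
      = ((∑ j, b j * ‖(Cᴴ *ᵥ y) j‖ ^ 2 : ℝ) : ℂ) := by
  rw [← mulVec_mulVec, ← mulVec_mulVec, dotProduct_mulVec,
    show star y ᵥ* C = star (Cᴴ *ᵥ y) by rw [star_mulVec, conjTranspose_conjTranspose]]
  simp only [dotProduct, mulVec_diagonal, Pi.star_apply, Complex.ofReal_sum, Complex.ofReal_mul,
    Complex.ofReal_pow]
  refine Finset.sum_congr rfl fun j _ => ?_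
  rw [RCLike.star_def, ← Complex.mul_conj', mul_left_comm, mul_comm (starRingEnd ℂ _)]

theorem conjTranspose_mulVec_eq_zero_of_posSemidef {b : n → ℝ} (hb : ∀ j, b j ≠ 0)
    {C D : Matrix m n ℂ}
    (hacc : (C * diagonal (fun j => (b j : ℂ)) * Cᴴ
      - D * diagonal (fun j => (b j : ℂ)) * Dᴴ).PosSemidef)
    {y : m → ℂ}
    (hy : (C * diagonal (fun j => if 0 < b j then (1 : ℂ) else 0)
      + D * diagonal (fun j => if b j < 0 then (1 : ℂ) else 0))ᴴ *ᵥ y = 0) :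
    Cᴴ *ᵥ y = 0 ∧ Dᴴ *ᵥ y = 0 := by
  rw [conjTranspose_mul_diagonal_add_mul_diagonal_mulVec] at hy
  have hC_pos : ∀ j, 0 < b j → (Cᴴ *ᵥ y) j = 0 := fun j hj => by
    simpa [hj, hj.not_gt] using congrFun hy j
  have hD_neg : ∀ j, b j < 0 → (Dᴴ *ᵥ y) j = 0 := fun j hj => by
    simpa [hj, hj.not_gt] using congrFun hy j
  have hform : 0 ≤ ∑ j, b j * (‖(Cᴴ *ᵥ y) j‖ ^ 2 - ‖(Dᴴ *ᵥ y) j‖ ^ 2) := by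
    have := hacc.dotProduct_mulVec_nonneg y
    rw [sub_mulVec, dotProduct_sub, dotProduct_mul_diagonal_mul_conjTranspose_mulVec,
      dotProduct_mul_diagonal_mul_conjTranspose_mulVec, ← Complex.ofReal_sub,
      Complex.zero_le_real, ← Finset.sum_sub_distrib] at this
    simpa only [mul_sub] using this
  have h := forall_eq_zero_of_sum_mul_sub_nonneg hb (fun _ => sq_nonneg _) (fun _ => sq_nonneg _)
    (fun j hj => by simp [hC_pos j hj]) (fun j hj => by simp [hD_neg j hj]) hform
  exact ⟨funext fun j => by simpa using (h j).1, funext fun j => by simpa using (h j).2⟩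

end Matrix

/-- Lemma `lem:accum.detTBCD`: let `B = B*` be an invertible selfadjoint
diagonal matrix with spectral projections `P₊`, `P₋` onto its positive/negative parts.  If
`rank (C D) = n` and `C B C* - D B D* ≥ 0`, then `T₋ = C P₊ + D P₋` is invertible. -/
theorem stmt6 (n : ℕ) (b : Fin n → ℝ) (hb : ∀ j, b j ≠ 0)
    (C D : Matrix (Fin n) (Fin n) ℂ)
    (hrank : (Matrix.fromCols C D).rank = n)
    (hacc : (C * Matrix.diagonal (fun j => (b j : ℂ)) * Cᴴ
           - D * Matrix.diagonal (fun j => (b j : ℂ)) * Dᴴ).PosSemidef) :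
    IsUnit (C * Matrix.diagonal (fun j => if 0 < b j then (1:ℂ) else 0)
          + D * Matrix.diagonal (fun j => if b j < 0 then (1:ℂ) else 0)) := by
  rw [← isUnit_conjTranspose, ← mulVec_injective_iff_isUnit, ← coe_mulVecLin,
    ← LinearMap.ker_eq_bot, ker_mulVecLin_eq_bot_iff]
  intro y hy
  obtain ⟨hC, hD⟩ := conjTranspose_mulVec_eq_zero_of_posSemidef hb hacc hy
  have hker := ker_mulVecLin_eq_bot_of_rank_eq_card (A := (fromCols C D)ᴴ)
    (by rw [rank_conjTranspose, hrank, Fintype.card_fin])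
  refine ker_mulVecLin_eq_bot_iff.1 hker y ?_
  rw [conjTranspose_fromCols_eq_fromRows_conjTranspose, fromRows_mulVec, hC, hD]
  exact Sum.elim_zero_zero
end

section
/- Let B be an invertible selfadjoint diagonal n×n matrix, C, D ∈ ℂ^{n×n} with rank(C D) = n, and let B̃ = diag(B^{-1}, -B^{-1}) define the Hermitian form w(u,v) = ⟨B̃u,v⟩ on ℂ^{2n}. Then the subspace H₁ = ker(C D) is w-nonpositive (i.e., ⟨B̃u,u⟩ ≤ 0 for all u ∈ H₁) if and only if C B C* - D B D* ≥ 0. -/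
/-!
The map `L = B̃⁻¹ (C D)ᴴ` is the `w`-adjoint of `T = (C D)`: `w(u, L x) = ⟨T u, x⟩`. Hence its
range `H₂` is `w`-orthogonal to `H₁ = ker T`, and `w(L x, L x) = ⟨(C B C* - D B D*) x, x⟩`. Both
`H₁` and `H₂` have dimension `n`, while a `w`-nonpositive (resp. nonnegative) subspace has
dimension at most `n`, the number of negative (resp. positive) squares of `w`. If `H₁` is
nonpositive but `w(L x, L x) < 0`, then `H₁ + span (L x)` is nonpositive of dimension `n + 1`.
If `C B C* - D B D* ≥ 0`, then `H₂` is nonnegative, and if `w(u, u) > 0` for some `u ∈ H₁`, then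
`H₂ + span u` is nonnegative of dimension `n + 1`. Either way the dimension bound is violated.
-/

open Matrix Module
open scoped ComplexOrder

namespace Matrix

section

variable {K m n : Type*} [Field K] [Fintype n]

lemma rank_add_finrank_ker_mulVecLin (A : Matrix m n K) :
    A.rank + finrank K (LinearMap.ker A.mulVecLin) = Fintype.card n :=
  A.mulVecLin.finrank_range_add_finrank_ker.trans (finrank_fintype_fun_eq_card K)

lemma ker_mulVecLin_eq_bot_of_rank_eq {A : Matrix m n K} (hA : A.rank = Fintype.card n) :
    LinearMap.ker A.mulVecLin = ⊥ := by
  have h := A.rank_add_finrank_ker_mulVecLin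
  rw [← Submodule.finrank_eq_zero]
  omega

end

lemma isHermitian_diagonal_ofReal {ι 𝕜 : Type*} [DecidableEq ι] [RCLike 𝕜] (e : ι → ℝ) :
    (diagonal fun i => (e i : 𝕜)).IsHermitian :=
  isHermitian_diagonal_of_self_adjoint _ (by ext i; simp)

variable {ι 𝕜 : Type*} [Fintype ι] [RCLike 𝕜]

def NonposOn (G : Matrix ι ι 𝕜) (W : Submodule 𝕜 (ι → 𝕜)) : Prop :=
  ∀ u ∈ W, RCLike.re (star u ⬝ᵥ G *ᵥ u) ≤ 0

lemma IsHermitian.star_dotProduct_mulVec_comm {G : Matrix ι ι 𝕜} (hG : G.IsHermitian)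
    (u v : ι → 𝕜) : star v ⬝ᵥ G *ᵥ u = star (star u ⬝ᵥ G *ᵥ v) := by
  rw [← star_dotProduct, star_mulVec, ← dotProduct_mulVec, hG.eq]

lemma NonposOn.sup_span_singleton {G : Matrix ι ι 𝕜} (hG : G.IsHermitian)
    {W : Submodule 𝕜 (ι → 𝕜)} (hW : NonposOn G W) {v : ι → 𝕜}
    (hv : RCLike.re (star v ⬝ᵥ G *ᵥ v) ≤ 0) (horth : ∀ y ∈ W, star v ⬝ᵥ G *ᵥ y = 0) :
    NonposOn G (W ⊔ 𝕜 ∙ v) := by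
  intro x hx
  obtain ⟨y, hy, _, hs, rfl⟩ := Submodule.mem_sup.mp hx
  obtain ⟨a, rfl⟩ := Submodule.mem_span_singleton.mp hs
  have hyv : star y ⬝ᵥ G *ᵥ v = 0 := by
    rw [hG.star_dotProduct_mulVec_comm, horth y hy, star_zero]
  have hexp : star (y + a • v) ⬝ᵥ G *ᵥ (y + a • v)
      = star y ⬝ᵥ G *ᵥ y + (‖a‖ ^ 2 : ℝ) * (star v ⬝ᵥ G *ᵥ v) := by
    simp only [star_add, star_smul, mulVec_add, mulVec_smul, add_dotProduct, dotProduct_add,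
      smul_dotProduct, dotProduct_smul, hyv, horth y hy, smul_eq_mul, RCLike.star_def]
    rw [RCLike.ofReal_pow, ← RCLike.conj_mul]
    ring
  rw [hexp, map_add, RCLike.re_ofReal_mul]
  nlinarith [hW y hy, sq_nonneg ‖a‖]

section diagonal

variable {κ : Type*} [DecidableEq ι]

lemma re_star_dotProduct_diagonal_mulVec (e : ι → ℝ) (u : ι → 𝕜) :
    RCLike.re (star u ⬝ᵥ diagonal (fun i => (e i : 𝕜)) *ᵥ u) = ∑ i, e i * ‖u i‖ ^ 2 := by
  simp only [dotProduct, mulVec_diagonal, map_sum, Pi.star_apply, RCLike.star_def]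
  refine Finset.sum_congr rfl fun i _ => ?_
  rw [mul_left_comm, RCLike.conj_mul, ← RCLike.ofReal_pow, ← RCLike.ofReal_mul, RCLike.ofReal_re]

lemma NonposOn.finrank_le_card_nonpos {e : ι → ℝ} {W : Submodule 𝕜 (ι → 𝕜)}
    (hW : NonposOn (diagonal fun i => (e i : 𝕜)) W) :
    finrank 𝕜 W ≤ Fintype.card {i // e i ≤ 0} := by
  let π := LinearMap.funLeft 𝕜 𝕜 (Subtype.val : {i // e i ≤ 0} → ι) ∘ₗ W.subtype
  suffices Function.Injective π by
    simpa using LinearMap.finrank_le_finrank_of_injective this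
  rw [← LinearMap.ker_eq_bot, Submodule.eq_bot_iff]
  rintro ⟨u, hu⟩ hπ
  have hneg : ∀ i, e i ≤ 0 → u i = 0 := fun i hi => congrFun hπ ⟨i, hi⟩
  have hterm : ∀ i, 0 ≤ e i * ‖u i‖ ^ 2 := fun i => by
    rcases le_or_gt (e i) 0 with hi | hi
    · simp [hneg i hi]
    · positivity
  have hsum : ∑ i, e i * ‖u i‖ ^ 2 = 0 :=
    le_antisymm (re_star_dotProduct_diagonal_mulVec e u ▸ hW u hu)
      (Finset.sum_nonneg fun i _ => hterm i)
  have hzero := (Finset.sum_eq_zero_iff_of_nonneg fun i _ => hterm i).mp hsum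
  ext i
  rcases le_or_gt (e i) 0 with hi | hi
  · exact hneg i hi
  · simpa [hi.ne'] using hzero i (Finset.mem_univ i)

lemma NonposOn.finrank_lt_card_nonpos {e : ι → ℝ} {W : Submodule 𝕜 (ι → 𝕜)}
    (hW : NonposOn (diagonal fun i => (e i : 𝕜)) W) {v : ι → 𝕜}
    (hv : RCLike.re (star v ⬝ᵥ diagonal (fun i => (e i : 𝕜)) *ᵥ v) < 0)
    (horth : ∀ y ∈ W, star v ⬝ᵥ diagonal (fun i => (e i : 𝕜)) *ᵥ y = 0) :
    finrank 𝕜 W < Fintype.card {i // e i ≤ 0} := by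
  have hvW : v ∉ W := fun h => by simp [horth v h] at hv
  calc finrank 𝕜 W < finrank 𝕜 ↥(W ⊔ 𝕜 ∙ v) :=
        Submodule.finrank_lt_finrank_of_lt (Submodule.lt_sup_iff_notMem.mpr hvW)
    _ ≤ _ :=
      (hW.sup_span_singleton (isHermitian_diagonal_ofReal e) hv.le horth).finrank_le_card_nonpos

def formAdjoint (e : ι → ℝ) (T : Matrix κ ι 𝕜) : Matrix ι κ 𝕜 :=
  diagonal (fun i => ((e i)⁻¹ : 𝕜)) * Tᴴ

lemma diagonal_mul_formAdjoint {e : ι → ℝ} (he : ∀ i, e i ≠ 0) (T : Matrix κ ι 𝕜) :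
    diagonal (fun i => (e i : 𝕜)) * formAdjoint e T = Tᴴ := by
  rw [formAdjoint, ← Matrix.mul_assoc, diagonal_mul_diagonal]
  convert Matrix.one_mul Tᴴ
  ext i j
  simp [diagonal, one_apply, he]

lemma star_dotProduct_diagonal_mulVec_formAdjoint [Fintype κ] {e : ι → ℝ} (he : ∀ i, e i ≠ 0)
    (T : Matrix κ ι 𝕜) (u : ι → 𝕜) (x : κ → 𝕜) :
    star u ⬝ᵥ diagonal (fun i => (e i : 𝕜)) *ᵥ (formAdjoint e T *ᵥ x) = star (T *ᵥ u) ⬝ᵥ x := by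
  rw [mulVec_mulVec, diagonal_mul_formAdjoint he, dotProduct_mulVec, star_mulVec]

lemma re_star_dotProduct_diagonal_mulVec_formAdjoint [Fintype κ] {e : ι → ℝ} (he : ∀ i, e i ≠ 0)
    (T : Matrix κ ι 𝕜) (x : κ → 𝕜) :
    RCLike.re (star (formAdjoint e T *ᵥ x) ⬝ᵥ
        diagonal (fun i => (e i : 𝕜)) *ᵥ (formAdjoint e T *ᵥ x)) =
      RCLike.re (star x ⬝ᵥ (T * diagonal (fun i => ((e i)⁻¹ : 𝕜)) * Tᴴ) *ᵥ x) := by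
  rw [star_dotProduct_diagonal_mulVec_formAdjoint he, mulVec_mulVec, formAdjoint,
    ← Matrix.mul_assoc, star_dotProduct, RCLike.star_def, RCLike.conj_re]

lemma injective_formAdjoint [Fintype κ] {e : ι → ℝ} (he : ∀ i, e i ≠ 0) {T : Matrix κ ι 𝕜}
    (hT : T.rank = Fintype.card κ) : Function.Injective (formAdjoint e T).mulVecLin := by
  rw [← LinearMap.ker_eq_bot, eq_bot_iff]
  intro x hx
  rw [← ker_mulVecLin_eq_bot_of_rank_eq ((rank_conjTranspose T).trans hT), LinearMap.mem_ker,
    mulVecLin_apply, ← diagonal_mul_formAdjoint he, ← mulVec_mulVec]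
  rw [LinearMap.mem_ker, mulVecLin_apply] at hx
  rw [hx, mulVec_zero]

theorem posSemidef_of_nonposOn_ker [Fintype κ] {e : ι → ℝ} (he : ∀ i, e i ≠ 0) {T : Matrix κ ι 𝕜}
    (hpos : Fintype.card κ ≤ Fintype.card {i // 0 < e i})
    (hH : NonposOn (diagonal fun i => (e i : 𝕜)) (LinearMap.ker T.mulVecLin)) :
    (T * diagonal (fun i => ((e i)⁻¹ : 𝕜)) * Tᴴ).PosSemidef := by
  have hM : (T * diagonal (fun i => ((e i)⁻¹ : 𝕜)) * Tᴴ).IsHermitian :=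
    isHermitian_mul_mul_conjTranspose T (isHermitian_diagonal_of_self_adjoint _ (by ext i; simp))
  refine PosSemidef.of_dotProduct_mulVec_nonneg hM fun x =>
    RCLike.nonneg_iff.mpr ⟨?_, hM.im_star_dotProduct_mulVec_self x⟩
  by_contra! hx
  have hlt := hH.finrank_lt_card_nonpos (v := formAdjoint e T *ᵥ x)
    (by rwa [re_star_dotProduct_diagonal_mulVec_formAdjoint he]) fun y hy => by
      rw [(isHermitian_diagonal_ofReal e).star_dotProduct_mulVec_comm,
        star_dotProduct_diagonal_mulVec_formAdjoint he,
        show T *ᵥ y = 0 from LinearMap.mem_ker.mp hy, star_zero, zero_dotProduct, star_zero]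
  have hker := T.rank_add_finrank_ker_mulVecLin
  have hrank := T.rank_le_card_height
  have hcard : Fintype.card {i // e i ≤ 0} = Fintype.card ι - Fintype.card {i // 0 < e i} := by
    simp_rw [← not_lt]
    exact Fintype.card_subtype_compl _
  omega

theorem nonposOn_ker_of_posSemidef [Fintype κ] {e : ι → ℝ} (he : ∀ i, e i ≠ 0) {T : Matrix κ ι 𝕜}
    (hT : T.rank = Fintype.card κ) (hpos : Fintype.card {i // 0 < e i} ≤ Fintype.card κ)
    (hM : (T * diagonal (fun i => ((e i)⁻¹ : 𝕜)) * Tᴴ).PosSemidef) :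
    NonposOn (diagonal fun i => (e i : 𝕜)) (LinearMap.ker T.mulVecLin) := by
  intro u hu
  by_contra! hu'
  have hneg : diagonal (fun i => ((-e i : ℝ) : 𝕜)) = -diagonal fun i => (e i : 𝕜) := by
    simp [diagonal_neg]
  have hH₂ : NonposOn (diagonal fun i => ((-e i : ℝ) : 𝕜))
      (LinearMap.range (formAdjoint e T).mulVecLin) := by
    rintro _ ⟨x, rfl⟩
    rw [hneg, neg_mulVec, dotProduct_neg, map_neg, neg_nonpos, mulVecLin_apply,
      re_star_dotProduct_diagonal_mulVec_formAdjoint he]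
    exact hM.re_dotProduct_nonneg x
  have hlt := hH₂.finrank_lt_card_nonpos (v := u)
    (by rwa [hneg, neg_mulVec, dotProduct_neg, map_neg, neg_neg_iff_pos]) fun y hy => by
      obtain ⟨x, rfl⟩ := hy
      rw [hneg, neg_mulVec, dotProduct_neg, mulVecLin_apply,
        star_dotProduct_diagonal_mulVec_formAdjoint he,
        show T *ᵥ u = 0 from LinearMap.mem_ker.mp hu,
        star_zero, zero_dotProduct, neg_zero]
  have hcard : Fintype.card {i // -e i ≤ 0} = Fintype.card {i // 0 < e i} :=
    Fintype.card_congr <| Equiv.subtypeEquivRight fun i => by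
      rw [neg_nonpos, (he i).symm.le_iff_lt]
  rw [LinearMap.finrank_range_of_inj (injective_formAdjoint he hT), finrank_fintype_fun_eq_card,
    hcard] at hlt
  omega

theorem nonposOn_ker_iff_posSemidef [Fintype κ] {e : ι → ℝ} (he : ∀ i, e i ≠ 0) {T : Matrix κ ι 𝕜}
    (hT : T.rank = Fintype.card κ) (hpos : Fintype.card {i // 0 < e i} = Fintype.card κ) :
    NonposOn (diagonal fun i => (e i : 𝕜)) (LinearMap.ker T.mulVecLin) ↔
      (T * diagonal (fun i => ((e i)⁻¹ : 𝕜)) * Tᴴ).PosSemidef :=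
  ⟨posSemidef_of_nonposOn_ker he hpos.ge, nonposOn_ker_of_posSemidef he hT hpos.le⟩

end diagonal

lemma fromCols_mul_fromBlocks_neg_mul_conjTranspose {R m n : Type*} [Ring R] [StarRing R]
    [Fintype n] (C D : Matrix m n R) (B : Matrix n n R) :
    fromCols C D * fromBlocks B 0 0 (-B) * (fromCols C D)ᴴ = C * B * Cᴴ - D * B * Dᴴ := by
  rw [fromCols_mul_fromBlocks, conjTranspose_fromCols_eq_fromRows_conjTranspose,
    fromCols_mul_fromRows]
  simp only [Matrix.mul_zero, add_zero, zero_add, Matrix.mul_neg, Matrix.neg_mul]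
  exact (sub_eq_add_neg _ _).symm

end Matrix

lemma card_pos_sumElim_neg {m : Type*} [Fintype m] {f : m → ℝ} (hf : ∀ j, f j ≠ 0) :
    Fintype.card {i // 0 < Sum.elim f (-f) i} = Fintype.card m := by
  have hneg (j : m) : 0 < Sum.elim f (-f) (Sum.inr j) ↔ ¬ 0 < f j := by
    rw [Sum.elim_inr, Pi.neg_apply, neg_pos, not_lt, (hf j).le_iff_lt]
  exact Fintype.card_congr <| Equiv.subtypeSum.trans <|
    (Equiv.sumCongr (Equiv.refl _) (Equiv.subtypeEquivRight hneg)).trans (Equiv.sumCompl _)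

/-- part of Lemma `lem:accum.CB*C-DB*D`: with
`B̃ = diag(B⁻¹, -B⁻¹)` and the Hermitian form `w(u,u) = ⟨B̃u,u⟩` on `ℂ²ⁿ`, the subspace
`H₁ = ker (C D)` is `w`-nonpositive if and only if `C B C* - D B D* ≥ 0`. -/
theorem stmt7 (n : ℕ) (b : Fin n → ℝ) (hb : ∀ j, b j ≠ 0)
    (C D : Matrix (Fin n) (Fin n) ℂ)
    (hrank : (Matrix.fromCols C D).rank = n) :
    (∀ u : (Fin n ⊕ Fin n) → ℂ,
        C *ᵥ (u ∘ Sum.inl) + D *ᵥ (u ∘ Sum.inr) = 0 →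
        (star u ⬝ᵥ ((Matrix.fromBlocks
            (Matrix.diagonal (fun j => (b j : ℂ)))⁻¹ 0 0
            (-(Matrix.diagonal (fun j => (b j : ℂ)))⁻¹)) *ᵥ u)).re ≤ 0)
    ↔ (C * Matrix.diagonal (fun j => (b j : ℂ)) * Cᴴ
     - D * Matrix.diagonal (fun j => (b j : ℂ)) * Dᴴ).PosSemidef := by
  have hb' : ∀ j, b⁻¹ j ≠ 0 := fun j => inv_ne_zero (hb j)
  set e : Fin n ⊕ Fin n → ℝ := Sum.elim b⁻¹ (-b⁻¹)
  have he : ∀ i, e i ≠ 0 := by rintro (j | j) <;> simp [e, hb j]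
  have hinv : (diagonal fun j => (b j : ℂ))⁻¹ = diagonal fun j => ((b j)⁻¹ : ℂ) :=
    inv_eq_left_inv (by simp [diagonal_mul_diagonal, hb])
  have hG : fromBlocks (diagonal fun j => (b j : ℂ))⁻¹ 0 0 (-(diagonal fun j => (b j : ℂ))⁻¹) =
      diagonal fun i => (e i : ℂ) := by
    rw [hinv, diagonal_neg, fromBlocks_diagonal]
    congr 1
    ext (j | j) <;> simp [e]
  have hM : fromCols C D * diagonal (fun i => ((e i)⁻¹ : ℂ)) * (fromCols C D)ᴴ =
      C * diagonal (fun j => (b j : ℂ)) * Cᴴ - D * diagonal (fun j => (b j : ℂ)) * Dᴴ := by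
    rw [← fromCols_mul_fromBlocks_neg_mul_conjTranspose, diagonal_neg, fromBlocks_diagonal]
    congr 3
    ext (j | j) <;> simp [e]
  have key : NonposOn (diagonal fun i => (e i : ℂ)) (LinearMap.ker (fromCols C D).mulVecLin) ↔
      (fromCols C D * diagonal (fun i => ((e i)⁻¹ : ℂ)) * (fromCols C D)ᴴ).PosSemidef :=
    nonposOn_ker_iff_posSemidef he (by simpa using hrank) (by simpa using card_pos_sumElim_neg hb')
  rw [hG, ← hM, ← key]
  simp [NonposOn]
end

section
/- For every a ∈ ℂ, the system of functions {e^{aπnx} sin(πnx)}_{n ∈ ℤ\{0\}} together with {πn·e^{(a-i)πnx}}_{n ∈ ℤ\{0\}}, arranged as the ℂ²-valued functions v_n(x) = (e^{aπnx} sin(πnx), πn·e^{(a-i)πnx}) for n ∈ ℤ\{0\}, consists of eigenfunctions of the boundary value problem y₁' = e^{iθ}λy₁ + y₂, y₂' = e^{-iθ}λy₂ on [0,1] with boundary conditions y₁(0) = y₁(1) = 0, where a = cot θ; the eigenvalue corresponding to v_n is λ_n = πn/sin θ, and the spectrum of this problem is exactly {πn/sin θ : n ∈ ℤ\{0\}}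 with each eigenvalue simple. -/
/-- First component `e^{aπnx}·sin(πnx)` of the eigenfunction `v_n`. -/
noncomputable def stmt12v1 (a : ℂ) (n : ℤ) (x : ℝ) : ℂ :=
  Complex.exp (a * (Real.pi * n) * x) * Complex.sin (Real.pi * n * x)

/-- Second component `πn·e^{(a-i)πnx}` of the eigenfunction `v_n`. -/
noncomputable def stmt12v2 (a : ℂ) (n : ℤ) (x : ℝ) : ℂ :=
  (Real.pi * n : ℂ) * Complex.exp ((a - Complex.I) * (Real.pi * n) * x)

/-- `(y₁,y₂)` solves the system `y₁' = e^{iθ}λy₁ + y₂`, `y₂' = e^{-iθ}λy₂` on `[0,1]`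
with boundary conditions `y₁(0) = y₁(1) = 0`. -/
def stmt12IsSol (θ lam : ℂ) (y₁ y₂ : ℝ → ℂ) : Prop :=
  (∀ x : ℝ, HasDerivAt y₁ (Complex.exp (Complex.I * θ) * lam * y₁ x + y₂ x) x) ∧
  (∀ x : ℝ, HasDerivAt y₂ (Complex.exp (-Complex.I * θ) * lam * y₂ x) x) ∧
  y₁ 0 = 0 ∧ y₁ 1 = 0

open Complex

/-!
With `p = e^{iθ}λ` and `q = e^{-iθ}λ` the problem is the triangular system `y₁' = p y₁ + y₂`,
`y₂' = q y₂`, which is solved explicitly: `y₂ = y₂(0) e^{qx}` and, once `y₁(0) = 0`,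
`(p - q) y₁ = y₂(0) (e^{px} - e^{qx})` (and `y₁ = y₂(0) x e^{px}` if `p = q`). Hence a nontrivial
solution with `y₁(1) = 0` exists iff `p ≠ q` and `e^p = e^q`, i.e. `2i sin θ · λ ∈ 2πi (ℤ ∖ {0})`,
and it is a multiple of `(e^{px} - e^{qx}, (p - q) e^{qx})`, which is `2i v_n` for `λ = πn / sin θ`.

For an associated function `u`, pair it with the eigenfunction
`w = ((p - q) e^{-px}, e^{-px} - e^{-qx})` of the adjoint problem: `⟨w, u⟩` vanishes at `0` and
`1`, while its derivative integrates over `[0, 1]` to a nonzero multiple of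
`e^{iθ} - e^{-iθ} = 2i sin θ`.
-/

theorem hasDerivAt_cexp_mul_ofReal (c : ℂ) (x : ℝ) :
    HasDerivAt (fun t : ℝ => exp (c * t)) (c * exp (c * x)) x := by
  simpa [mul_comm] using ((hasDerivAt_id (x : ℂ)).const_mul c).cexp.comp_ofReal

theorem eq_mul_cexp_of_hasDerivAt {μ : ℂ} {f : ℝ → ℂ}
    (hf : ∀ x : ℝ, HasDerivAt f (μ * f x) x) (x : ℝ) : f x = f 0 * exp (μ * x) := by
  have hg : ∀ t : ℝ, HasDerivAt (fun t : ℝ => f t * exp (-μ * t)) 0 t := fun t =>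
    ((hf t).mul (hasDerivAt_cexp_mul_ofReal (-μ) t)).congr_deriv (by ring)
  have hc := is_const_of_deriv_eq_zero (fun t => (hg t).differentiableAt)
    (fun t => (hg t).deriv) x 0
  simp only [ofReal_zero, mul_zero, exp_zero, mul_one] at hc
  rw [← hc, mul_assoc, ← exp_add]
  simp

def IsTriangularBVPSol (p q : ℂ) (y₁ y₂ : ℝ → ℂ) : Prop :=
  (∀ x : ℝ, HasDerivAt y₁ (p * y₁ x + y₂ x) x) ∧ (∀ x : ℝ, HasDerivAt y₂ (q * y₂ x) x) ∧
    y₁ 0 = 0 ∧ y₁ 1 = 0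

section TriangularSystem

variable {p q : ℂ} {y₁ y₂ : ℝ → ℂ}

theorem eq_mul_ofReal_mul_cexp_of_hasDerivAt
    (h₁ : ∀ x : ℝ, HasDerivAt y₁ (p * y₁ x + y₂ x) x)
    (h₂ : ∀ x : ℝ, HasDerivAt y₂ (p * y₂ x) x) (h0 : y₁ 0 = 0) (x : ℝ) :
    y₁ x = y₂ 0 * x * exp (p * x) := by
  have hz : ∀ t : ℝ, HasDerivAt (fun t : ℝ => y₁ t - y₂ 0 * t * exp (p * t))
      (p * (y₁ t - y₂ 0 * t * exp (p * t))) t := by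
    intro t
    have hid : HasDerivAt (fun t : ℝ => (t : ℂ)) 1 t := by
      simpa using (hasDerivAt_id t).ofReal_comp
    refine ((h₁ t).sub ((hid.const_mul (y₂ 0)).mul
      (hasDerivAt_cexp_mul_ofReal p t))).congr_deriv ?_
    rw [eq_mul_cexp_of_hasDerivAt h₂ t]
    ring
  have := eq_mul_cexp_of_hasDerivAt hz x
  simp only [h0, ofReal_zero, mul_zero, zero_mul, sub_zero] at this
  exact sub_eq_zero.1 this

theorem sub_mul_eq_mul_cexp_sub_cexp_of_hasDerivAt
    (h₁ : ∀ x : ℝ, HasDerivAt y₁ (p * y₁ x + y₂ x) x)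
    (h₂ : ∀ x : ℝ, HasDerivAt y₂ (q * y₂ x) x) (h0 : y₁ 0 = 0) (x : ℝ) :
    (p - q) * y₁ x = y₂ 0 * (exp (p * x) - exp (q * x)) := by
  have hz : ∀ t : ℝ, HasDerivAt (fun t : ℝ => (p - q) * y₁ t - y₂ 0 * exp (p * t) + y₂ t)
      (p * ((p - q) * y₁ t - y₂ 0 * exp (p * t) + y₂ t)) t := fun t =>
    ((((h₁ t).const_mul (p - q)).sub ((hasDerivAt_cexp_mul_ofReal p t).const_mul (y₂ 0))).add
      (h₂ t)).congr_deriv (by ring)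
  have := eq_mul_cexp_of_hasDerivAt hz x
  simp only [h0, ofReal_zero, mul_zero, exp_zero, mul_one, zero_sub,
    neg_add_cancel, zero_mul] at this
  rw [eq_mul_cexp_of_hasDerivAt h₂ x] at this
  linear_combination this

theorem exists_eq_mul_cexp_sub_cexp_of_hasDerivAt (hpq : p ≠ q)
    (h₁ : ∀ x : ℝ, HasDerivAt y₁ (p * y₁ x + y₂ x) x)
    (h₂ : ∀ x : ℝ, HasDerivAt y₂ (q * y₂ x) x) (h0 : y₁ 0 = 0) :
    ∃ c : ℂ, (y₁ = fun x : ℝ => c * (exp (p * x) - exp (q * x))) ∧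
      y₂ = fun x : ℝ => c * ((p - q) * exp (q * x)) := by
  have hpq' : p - q ≠ 0 := sub_ne_zero.2 hpq
  refine ⟨y₂ 0 / (p - q), funext fun x => ?_, funext fun x => ?_⟩
  · rw [div_mul_eq_mul_div, eq_div_iff hpq', mul_comm,
      sub_mul_eq_mul_cexp_sub_cexp_of_hasDerivAt h₁ h₂ h0]
  · rw [eq_mul_cexp_of_hasDerivAt h₂ x]
    field_simp

theorem isTriangularBVPSol_mul_cexp_sub_cexp (c : ℂ) (hexp : exp p = exp q) :
    IsTriangularBVPSol p q (fun x : ℝ => c * (exp (p * x) - exp (q * x)))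
      (fun x : ℝ => c * ((p - q) * exp (q * x))) := by
  refine ⟨fun x => ?_, fun x => ?_, by simp, by simp [hexp]⟩
  · exact (((hasDerivAt_cexp_mul_ofReal p x).sub (hasDerivAt_cexp_mul_ofReal q x)).const_mul
      c).congr_deriv (by ring)
  · exact (((hasDerivAt_cexp_mul_ofReal q x).const_mul (p - q)).const_mul c).congr_deriv
      (by ring)

theorem exists_nontrivial_isTriangularBVPSol_iff :
    (∃ y₁ y₂ : ℝ → ℂ, IsTriangularBVPSol p q y₁ y₂ ∧ ¬(y₁ = 0 ∧ y₂ = 0)) ↔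
      p ≠ q ∧ exp p = exp q := by
  constructor
  · rintro ⟨y₁, y₂, ⟨h₁, h₂, h0, h1⟩, hnt⟩
    have hpq : p ≠ q := by
      rintro rfl
      have hy₂0 : y₂ 0 = 0 := by
        simpa [exp_ne_zero, h1] using (eq_mul_ofReal_mul_cexp_of_hasDerivAt h₁ h₂ h0 1).symm
      refine hnt ⟨funext fun x => ?_, funext fun x => ?_⟩
      · simp [eq_mul_ofReal_mul_cexp_of_hasDerivAt h₁ h₂ h0 x, hy₂0]
      · simp [eq_mul_cexp_of_hasDerivAt h₂ x, hy₂0]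
    obtain ⟨c, rfl, rfl⟩ := exists_eq_mul_cexp_sub_cexp_of_hasDerivAt hpq h₁ h₂ h0
    have hc : c ≠ 0 := by
      rintro rfl
      exact hnt ⟨funext fun x => by simp, funext fun x => by simp⟩
    simp only [ofReal_one, mul_one] at h1
    exact ⟨hpq, sub_eq_zero.1 ((mul_eq_zero.1 h1).resolve_left hc)⟩
  · rintro ⟨hpq, hexp⟩
    refine ⟨_, _, isTriangularBVPSol_mul_cexp_sub_cexp 1 hexp, fun h => ?_⟩
    have := congrFun h.2 0
    simp [sub_eq_zero, hpq] at this

theorem eq_of_associated_sol {c F E : ℂ} {u₁ u₂ : ℝ → ℂ} (hpq : p ≠ q) (hexp : exp p = exp q)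
    (hc : c ≠ 0)
    (h₁ : ∀ x : ℝ, HasDerivAt u₁ (p * u₁ x + u₂ x + F * (c * (exp (p * x) - exp (q * x)))) x)
    (h₂ : ∀ x : ℝ, HasDerivAt u₂ (q * u₂ x + E * (c * ((p - q) * exp (q * x)))) x)
    (h0 : u₁ 0 = 0) (h1 : u₁ 1 = 0) : F = E := by
  have hqp : q - p ≠ 0 := sub_ne_zero.2 hpq.symm
  set κ := c * (p - q) * (F - E)
  -- `⟨w, u⟩` minus an antiderivative of its derivative `κ (1 - e^{(q - p) x})`
  have hΨ : ∀ x : ℝ, HasDerivAt (fun t : ℝ => (p - q) * exp (-p * t) * u₁ t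
      + (exp (-p * t) - exp (-q * t)) * u₂ t - κ * (t - exp ((q - p) * t) / (q - p))) 0 x := by
    intro x
    have e₁ : exp (-p * x) * exp (p * x) = 1 := by rw [← exp_add]; simp
    have e₂ : exp (-p * x) * exp (q * x) = exp ((q - p) * x) := by rw [← exp_add]; ring_nf
    have e₃ : exp (-q * x) * exp (q * x) = 1 := by rw [← exp_add]; simp
    have e₄ : (q - p) * exp ((q - p) * x) / (q - p) = exp ((q - p) * x) :=
      mul_div_cancel_left₀ _ hqp
    have hid : HasDerivAt (fun t : ℝ => (t : ℂ)) 1 x := by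
      simpa using (hasDerivAt_id x).ofReal_comp
    refine (((((hasDerivAt_cexp_mul_ofReal (-p) x).const_mul (p - q)).mul (h₁ x)).add
      (((hasDerivAt_cexp_mul_ofReal (-p) x).sub (hasDerivAt_cexp_mul_ofReal (-q) x)).mul
        (h₂ x))).sub ((hid.sub ((hasDerivAt_cexp_mul_ofReal (q - p) x).div_const
          (q - p))).const_mul κ)).congr_deriv ?_
    simp only [Pi.sub_apply]
    linear_combination c * (p - q) * F * e₁ - c * (p - q) * (F - E) * e₂
      - c * (p - q) * E * e₃ + κ * e₄
  have h := is_const_of_deriv_eq_zero (fun t => (hΨ t).differentiableAt)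
    (fun t => (hΨ t).deriv) 1 0
  simp only [ofReal_one, ofReal_zero, mul_one, mul_zero, h0, h1, exp_zero, exp_neg, exp_sub,
    hexp, div_self (exp_ne_zero q), sub_self, zero_mul, zero_add, zero_sub] at h
  have hκ : κ * (q - p) = 0 := by
    field_simp at h
    linear_combination -h
  replace hκ : κ = 0 := (mul_eq_zero.1 hκ).resolve_right hqp
  simpa [κ, hc, sub_eq_zero, hpq] using hκ

end TriangularSystem

theorem cexp_I_mul_sub_cexp_neg_I_mul (θ : ℂ) : exp (I * θ) - exp (-I * θ) = 2 * I * sin θ := by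
  rw [mul_comm I, exp_mul_I, show -I * θ = -θ * I by ring, exp_mul_I, cos_neg, sin_neg]
  ring

section Cotangent

variable {a θ : ℂ}

theorem cexp_I_mul_mul_div_sin (hs : sin θ ≠ 0) (ha : a * sin θ = cos θ) (z : ℂ) :
    exp (I * θ) * (z / sin θ) = (a + I) * z := by
  rw [mul_comm I, exp_mul_I, ← ha]
  field_simp

theorem cexp_neg_I_mul_mul_div_sin (hs : sin θ ≠ 0) (ha : a * sin θ = cos θ) (z : ℂ) :
    exp (-I * θ) * (z / sin θ) = (a - I) * z := by
  rw [show -I * θ = -θ * I by ring, exp_mul_I, cos_neg, sin_neg, ← ha]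
  field_simp
  ring

theorem ne_and_cexp_eq_iff_exists_int (hs : sin θ ≠ 0) (lam : ℂ) :
    (exp (I * θ) * lam ≠ exp (-I * θ) * lam ∧
        exp (exp (I * θ) * lam) = exp (exp (-I * θ) * lam)) ↔
      ∃ n : ℤ, n ≠ 0 ∧ lam = Real.pi * n / sin θ := by
  have hsub : exp (I * θ) * lam - exp (-I * θ) * lam = 2 * I * sin θ * lam := by
    rw [← sub_mul, cexp_I_mul_sub_cexp_neg_I_mul]
  rw [exp_eq_exp_iff_exists_int]
  constructor
  · rintro ⟨hne, n, hn⟩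
    refine ⟨n, fun h => hne (by simpa [h] using hn), ?_⟩
    rw [eq_div_iff hs]
    linear_combination (I / 2) * (hsub - hn) + (lam * sin θ - Real.pi * n) * I_sq
  · rintro ⟨n, hn, rfl⟩
    have h : exp (I * θ) * (Real.pi * n / sin θ) - exp (-I * θ) * (Real.pi * n / sin θ)
        = n * (2 * Real.pi * I) := by
      rw [hsub]
      field_simp
    refine ⟨fun h' => ?_, n, by linear_combination h⟩
    rw [h', sub_self] at h
    simp [hn, Real.pi_ne_zero, I_ne_zero] at h

end Cotangent

theorem stmt12v1_eq (a : ℂ) (n : ℤ) :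
    stmt12v1 a n = fun x : ℝ => (2 * I)⁻¹ *
      (exp ((a + I) * (Real.pi * n) * x) - exp ((a - I) * (Real.pi * n) * x)) := by
  funext x
  rw [stmt12v1, show (a + I) * (Real.pi * n) * x = a * (Real.pi * n) * x + Real.pi * n * x * I
      by ring, show (a - I) * (Real.pi * n) * x = a * (Real.pi * n) * x + -(Real.pi * n * x) * I
      by ring, exp_add, exp_add, exp_mul_I, exp_mul_I, cos_neg, sin_neg]
  field_simp
  ring

theorem stmt12v2_eq (a : ℂ) (n : ℤ) :
    stmt12v2 a n = fun x : ℝ => (2 * I)⁻¹ *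
      (((a + I) * (Real.pi * n) - (a - I) * (Real.pi * n)) *
        exp ((a - I) * (Real.pi * n) * x)) := by
  funext x
  rw [stmt12v2]
  field_simp
  ring

/-- proof of Corollary `cor:levin`: with `a = cot θ`, the vector
functions `v_n = (e^{aπnx}sin(πnx), πn·e^{(a-i)πnx})`, `n ∈ ℤ\{0}`, are eigenfunctions of
the boundary value problem `y₁' = e^{iθ}λy₁ + y₂`, `y₂' = e^{-iθ}λy₂`, `y₁(0)=y₁(1)=0`
with eigenvalue `λ_n = πn/sin θ`; the spectrum is exactly `{πn/sinθ : n ≠ 0}`, and each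
eigenvalue is simple (every eigenfunction is a multiple of `v_n`, and there is no
associated function). -/
theorem stmt12 (a θ : ℂ) (hθ : ∀ k : ℤ, θ ≠ k * Real.pi)
    (ha : a = Complex.cos θ / Complex.sin θ) :
    -- v_n is a (nonzero) eigenfunction with eigenvalue πn/sinθ
    (∀ n : ℤ, n ≠ 0 →
      stmt12IsSol θ (Real.pi * n / Complex.sin θ) (stmt12v1 a n) (stmt12v2 a n) ∧
      ¬(stmt12v1 a n = 0 ∧ stmt12v2 a n = 0))
    ∧
    -- the spectrum is exactly {πn/sinθ : n ∈ ℤ\{0}}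
    (∀ lam : ℂ,
      (∃ y₁ y₂ : ℝ → ℂ, stmt12IsSol θ lam y₁ y₂ ∧ ¬(y₁ = 0 ∧ y₂ = 0))
        ↔ ∃ n : ℤ, n ≠ 0 ∧ lam = Real.pi * n / Complex.sin θ)
    ∧
    -- geometric simplicity: every eigenfunction is a multiple of v_n
    (∀ n : ℤ, n ≠ 0 → ∀ y₁ y₂ : ℝ → ℂ,
      stmt12IsSol θ (Real.pi * n / Complex.sin θ) y₁ y₂ →
      ∃ c : ℂ, (y₁ = fun x => c * stmt12v1 a n x) ∧ (y₂ = fun x => c * stmt12v2 a n x))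
    ∧
    -- algebraic simplicity: there is no associated function to v_n
    (∀ n : ℤ, n ≠ 0 →
      ¬ ∃ u₁ u₂ : ℝ → ℂ,
        (∀ x : ℝ, HasDerivAt u₁
          (Complex.exp (Complex.I * θ) * (Real.pi * n / Complex.sin θ) * u₁ x + u₂ x
            + Complex.exp (Complex.I * θ) * stmt12v1 a n x) x) ∧
        (∀ x : ℝ, HasDerivAt u₂
          (Complex.exp (-Complex.I * θ) * (Real.pi * n / Complex.sin θ) * u₂ x
            + Complex.exp (-Complex.I * θ) * stmt12v2 a n x) x) ∧
        u₁ 0 = 0 ∧ u₁ 1 = 0) := by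
  have hs : sin θ ≠ 0 := fun h => (sin_eq_zero_iff.1 h).elim fun k hk => hθ k hk
  have hcot : a * sin θ = cos θ := by rw [ha, div_mul_cancel₀ _ hs]
  have hp := cexp_I_mul_mul_div_sin hs hcot
  have hq := cexp_neg_I_mul_mul_div_sin hs hcot
  have hpq : ∀ n : ℤ, n ≠ 0 → (a + I) * (Real.pi * n) ≠ (a - I) * (Real.pi * n) := by
    intro n hn h
    have : 2 * I * (Real.pi * n) = 0 := by linear_combination h
    simp [hn, Real.pi_ne_zero, I_ne_zero] at this
  have hexp : ∀ n : ℤ, exp ((a + I) * (Real.pi * n)) = exp ((a - I) * (Real.pi * n)) :=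
    fun n => exp_eq_exp_iff_exists_int.2 ⟨n, by ring⟩
  refine ⟨fun n hn => ⟨?_, ?_⟩, fun lam => ?_, fun n hn y₁ y₂ hy => ?_, fun n hn hu => ?_⟩
  · change IsTriangularBVPSol _ _ _ _
    rw [hp, hq, stmt12v1_eq, stmt12v2_eq]
    exact isTriangularBVPSol_mul_cexp_sub_cexp _ (hexp n)
  · rintro ⟨-, h⟩
    have := congrFun h 0
    simp [stmt12v2, hn, Real.pi_ne_zero] at this
  · exact exists_nontrivial_isTriangularBVPSol_iff.trans (ne_and_cexp_eq_iff_exists_int hs lam)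
  · obtain ⟨h₁, h₂, h0, -⟩ := hy
    simp only [hp, hq] at h₁ h₂
    obtain ⟨c, rfl, rfl⟩ := exists_eq_mul_cexp_sub_cexp_of_hasDerivAt (hpq n hn) h₁ h₂ h0
    refine ⟨2 * I * c, ?_, ?_⟩ <;> funext x <;> simp only [stmt12v1_eq, stmt12v2_eq] <;>
      field_simp
  · obtain ⟨u₁, u₂, h₁, h₂, h0, h1⟩ := hu
    simp only [hp, hq, stmt12v1_eq, stmt12v2_eq] at h₁ h₂
    have hFE := eq_of_associated_sol (hpq n hn) (hexp n) (by simp [I_ne_zero]) h₁ h₂ h0 h1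
    have : 2 * I * sin θ = 0 := by rw [← cexp_I_mul_sub_cexp_neg_I_mul, hFE, sub_self]
    simp [I_ne_zero, hs] at this
end

section
/- Let L = L_{C,D}(Q) be the operator -iB^{-1}y' + Q(x)y on L²([0,1];ℂⁿ) with boundary condition Cy(0) + Dy(1) = 0, where the first row of the boundary conditions is y₁(0) = 0 (i.e., c₁₁ = 1, c₁ₖ = 0 for k ≥ 2, d₁ₖ = 0 for all k). Suppose q_{1j}(x) = 0 for x ∈ [0,ε] and all j ∈ {2,...,n}, for some ε > 0. Then every eigenfunction or associated function u = (u₁,...,u_n) of L satisfies u₁(x) = 0 for x ∈ [0,ε]; consequently the closed linear span of the root functions of L has infinite codimension in L²([0,1];ℂⁿ). -/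
/-!
On `[0, ε]` the first equation of `L u_p = λ u_p + u_{p-1}` decouples:
`(u_p)₁' = i b₁ ((λ - q₁₁) (u_p)₁ + (u_{p-1})₁)` with `(u_p)₁(0) = 0`. Inductively along the
chain, and by uniqueness for scalar linear ODEs with integrable coefficient, `(u_p)₁ ≡ 0` there.
So every `(f₁, 0, …, 0)` with `f₁` supported in `[0, ε]` is orthogonal to all root functions,
and tents with disjoint supports in `(0, ε)` give infinitely many independent such vectors.
-/

open Matrix MeasureTheory

/-- `u` is a root function (eigenfunction or associated function) of the operator
`L_{C,D}(Q) = -iB⁻¹y' + Q(x)y`, `B = diag b`, with boundary conditions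
`C y(0) + D y(1) = 0`: it is a nonzero member of a chain `u_0 = 0, u_1, …, u_m = u` with
`L u_p = λ u_p + u_{p-1}` (equivalently `u_p' = iB(λu_p + u_{p-1} - Q u_p)`), each `u_p`
satisfying the boundary conditions. -/
def IsRootFunction {n : ℕ} (b : Fin n → ℂ) (Q : ℝ → Matrix (Fin n) (Fin n) ℂ)
    (C D : Matrix (Fin n) (Fin n) ℂ) (u : ℝ → Fin n → ℂ) : Prop :=
  ∃ (lam : ℂ) (m : ℕ) (ch : ℕ → ℝ → Fin n → ℂ),
    1 ≤ m ∧ ch 0 = 0 ∧ ch m = u ∧ u ≠ 0 ∧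
    ∀ p, 1 ≤ p → p ≤ m →
      (∀ x : ℝ, HasDerivAt (ch p)
        (Complex.I • (Matrix.diagonal b *ᵥ
          (lam • ch p x + ch (p-1) x - Q x *ᵥ ch p x))) x) ∧
      C *ᵥ ch p 0 + D *ᵥ ch p 1 = 0

open Set Filter Topology

section LinearODE

variable {a y : ℝ → ℂ} {α β : ℝ}

theorem eqOn_zero_of_hasDerivAt_mul_of_integral_norm_lt_one (hαβ : α ≤ β)
    (ha : IntervalIntegrable a volume α β) (hy : ∀ x ∈ Icc α β, HasDerivAt y (a x * y x) x)
    (hα : y α = 0) (hsmall : ∫ t in α..β, ‖a t‖ < 1) : EqOn y 0 (Icc α β) := by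
  have hcont : ContinuousOn y (Icc α β) := fun x hx => (hy x hx).continuousAt.continuousWithinAt
  obtain ⟨x₀, hx₀, hmax⟩ := isCompact_Icc.exists_isMaxOn (nonempty_Icc.2 hαβ) hcont.norm
  set M := ‖y x₀‖
  have hsub : uIcc α x₀ ⊆ Icc α β := uIcc_of_le hx₀.1 ▸ Icc_subset_Icc_right hx₀.2
  have hint : IntervalIntegrable (fun t => ‖a t‖) volume α x₀ :=
    (ha.mono_set (by rwa [uIcc_of_le hαβ])).norm
  have hrep : y x₀ = ∫ t in α..x₀, a t * y t := by
    rw [intervalIntegral.integral_eq_sub_of_hasDerivAt (fun t ht => hy t (hsub ht))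
      ((ha.mono_set (by rwa [uIcc_of_le hαβ])).mul_continuousOn (hcont.mono hsub)), hα, sub_zero]
  have hM : M ≤ (∫ t in α..β, ‖a t‖) * M :=
    calc M = ‖∫ t in α..x₀, a t * y t‖ := by rw [← hrep]
      _ ≤ ∫ t in α..x₀, ‖a t‖ * M :=
          intervalIntegral.norm_integral_le_of_norm_le hx₀.1
            (Eventually.of_forall fun t ht => by
              rw [norm_mul]
              exact mul_le_mul_of_nonneg_left
                (hmax (hsub (uIcc_of_le hx₀.1 ▸ Ioc_subset_Icc_self ht))) (norm_nonneg _))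
            (hint.mul_const M)
      _ = (∫ t in α..x₀, ‖a t‖) * M := intervalIntegral.integral_mul_const M _
      _ ≤ (∫ t in α..β, ‖a t‖) * M := by
          gcongr
          exact intervalIntegral.integral_mono_interval le_rfl hx₀.1 hx₀.2
            (Eventually.of_forall fun t => norm_nonneg _) ha.norm
  have hM0 : M = 0 := by nlinarith [norm_nonneg (y x₀)]
  exact fun x hx => norm_eq_zero.mp (le_antisymm (hM0 ▸ hmax hx) (norm_nonneg _))

/-- The zero set of `y` is closed and, since `∫ ‖a‖` is small over short intervals, extends to
the right of each of its points. -/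
theorem eqOn_zero_of_hasDerivAt_mul (ha : IntervalIntegrable a volume α β)
    (hy : ∀ x ∈ Icc α β, HasDerivAt y (a x * y x) x) (hα : y α = 0) :
    EqOn y 0 (Icc α β) := by
  have hcont : ContinuousOn y (Icc α β) := fun x hx => (hy x hx).continuousAt.continuousWithinAt
  have hclosed : IsClosed ({x | y x = 0} ∩ Icc α β) := by
    rw [inter_comm]; exact hcont.preimage_isClosed_of_isClosed isClosed_Icc isClosed_singleton
  refine fun x hx => IsClosed.Icc_subset_of_forall_mem_nhdsWithin hclosed hα ?_ hx
  rintro T ⟨hyT, hT⟩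
  have haT : IntervalIntegrable a volume T β :=
    ha.mono_set (by
      rw [uIcc_of_le hT.2.le, uIcc_of_le (hT.1.trans hT.2.le)]; exact Icc_subset_Icc_left hT.1)
  have hprim : Tendsto (fun c => ∫ t in T..c, ‖a t‖) (𝓝[>] T) (𝓝 0) := by
    have hcont := intervalIntegral.continuousOn_primitive_interval' haT.norm left_mem_uIcc T
      left_mem_uIcc
    rw [uIcc_of_le hT.2.le] at hcont
    simpa using (hcont.mono_of_mem_nhdsWithin (Icc_mem_nhdsGT hT.2)).tendsto
  obtain ⟨c, hsmall, hTc, hcβ⟩ :=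
    ((hprim.eventually (gt_mem_nhds one_pos)).and (Ioo_mem_nhdsGT hT.2)).exists
  have hIcc : Icc T c ⊆ Icc α β := Icc_subset_Icc hT.1 hcβ.le
  filter_upwards [Icc_mem_nhdsGT hTc] with t ht
  exact eqOn_zero_of_hasDerivAt_mul_of_integral_norm_lt_one hTc.le
    (haT.mono_set (by
      rw [uIcc_of_le hTc.le, uIcc_of_le hT.2.le]; exact Icc_subset_Icc_right hcβ.le))
    (fun x hx => hy x (hIcc hx)) hyT hsmall ht

end LinearODE

theorem Matrix.mulVec_apply_of_offDiag_eq_zero {ι R : Type*} [Fintype ι]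
    [NonUnitalNonAssocSemiring R] {M : Matrix ι ι R} {i : ι} (hM : ∀ j, j ≠ i → M i j = 0)
    (v : ι → R) : (M *ᵥ v) i = M i i * v i :=
  Finset.sum_eq_single i (fun j _ hj => by simp [hM j hj]) (by simp)

theorem hasDerivAt_apply_of_offDiag_eq_zero {ι : Type*} [Fintype ι] [DecidableEq ι]
    {b : ι → ℂ} {M : Matrix ι ι ℂ} {lam : ℂ} {y : ℝ → ι → ℂ} {z : ι → ℂ} {i : ι} {x : ℝ}
    (h : HasDerivAt y (Complex.I • (diagonal b *ᵥ (lam • y x + z - M *ᵥ y x))) x)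
    (hM : ∀ j, j ≠ i → M i j = 0) (hz : z i = 0) :
    HasDerivAt (fun t => y t i) (Complex.I * b i * (lam - M i i) * y x i) x := by
  refine (hasDerivAt_pi.mp h i).congr_deriv ?_
  simp only [Pi.smul_apply, mulVec_diagonal, Pi.sub_apply, Pi.add_apply,
    Matrix.mulVec_apply_of_offDiag_eq_zero hM, hz, smul_eq_mul]
  ring

/-- Along the chain, each `(u_p)ᵢ` solves `y' = i bᵢ (λ - qᵢᵢ) y`, `y(0) = 0`, the coupling
term `(u_{p-1})ᵢ` vanishing inductively. -/
theorem IsRootFunction.apply_eq_zero {n : ℕ} {b : Fin n → ℂ} {Q : ℝ → Matrix (Fin n) (Fin n) ℂ}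
    {C D : Matrix (Fin n) (Fin n) ℂ} {u : ℝ → Fin n → ℂ} (hu : IsRootFunction b Q C D u)
    {i : Fin n} {ε : ℝ} (hQii : IntervalIntegrable (fun x => Q x i i) volume 0 ε)
    (hQ : ∀ x ∈ Icc 0 ε, ∀ j, j ≠ i → Q x i j = 0)
    (hCii : C i i = 1) (hC : ∀ k, k ≠ i → C i k = 0) (hD : ∀ k, D i k = 0) :
    ∀ x ∈ Icc 0 ε, u x i = 0 := by
  obtain ⟨lam, m, ch, -, hch0, rfl, -, hchain⟩ := hu
  suffices ∀ p ≤ m, EqOn (fun x => ch p x i) 0 (Icc 0 ε) from this m le_rfl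
  intro p
  induction p with
  | zero => intro _ x _; simp [hch0]
  | succ p ih =>
    intro hpm
    obtain ⟨hder, hbc⟩ := hchain (p + 1) (by omega) hpm
    have h0 : ch (p + 1) 0 i = 0 := by
      simpa [Matrix.mulVec_apply_of_offDiag_eq_zero hC, hCii,
        Matrix.mulVec_apply_of_offDiag_eq_zero (fun k _ => hD k), hD] using congrFun hbc i
    refine eqOn_zero_of_hasDerivAt_mul (a := fun x => Complex.I * b i * (lam - Q x i i))
      ((intervalIntegrable_const.sub hQii).const_mul _) (fun x hx => ?_) h0
    rw [Nat.add_sub_cancel] at hder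
    exact hasDerivAt_apply_of_offDiag_eq_zero (hder x) (hQ x hx) (ih (by omega) hx)

theorem intervalIntegral.integral_star_dotProduct_eq_zero {ι : Type*} [Fintype ι]
    {f u : ℝ → ι → ℂ} {i : ι} {α β ε : ℝ} (hαβ : α ≤ β) (hf : ∀ x, ∀ j, j ≠ i → f x j = 0)
    (hfε : ∀ x ∈ Icc ε β, f x i = 0) (hu : ∀ x ∈ Icc α ε, u x i = 0) :
    ∫ x in α..β, star (f x) ⬝ᵥ u x = 0 := by
  rw [intervalIntegral.integral_congr (g := fun _ => 0) fun x hx => ?_,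
    intervalIntegral.integral_zero]
  rw [uIcc_of_le hαβ] at hx
  rw [dotProduct, Finset.sum_eq_single i (fun j _ hj => by simp [hf x j hj]) (by simp)]
  rcases le_total x ε with h | h
  · simp [hu x ⟨hx.1, h⟩]
  · simp [hfε x ⟨h, hx.2⟩]

theorem linearIndependent_of_apply_eq_zero_of_ne {K ι X M : Type*} [DivisionRing K]
    [AddCommGroup M] [Module K M] {g : ι → X → M} (pt : ι → X) (hdiag : ∀ k, g k (pt k) ≠ 0)
    (hoff : ∀ j k, j ≠ k → g j (pt k) = 0) : LinearIndependent K g := by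
  rw [linearIndependent_iff']
  intro s c hsum k hk
  have hk' := congrFun hsum (pt k)
  rw [Finset.sum_apply, Finset.sum_eq_single_of_mem k hk fun j _ hjk => by
    rw [Pi.smul_apply, hoff j k hjk, smul_zero]] at hk'
  exact (smul_eq_zero.mp hk').resolve_right (hdiag k)

def tent (c r x : ℝ) : ℝ := max 0 (r - |x - c|)

theorem continuous_tent (c r : ℝ) : Continuous (tent c r) := by
  unfold tent; fun_prop

theorem tent_self {c r : ℝ} (hr : 0 ≤ r) : tent c r c = r := by
  simp [tent, hr]

theorem tent_eq_zero {c r x : ℝ} (h : r ≤ |x - c|) : tent c r x = 0 :=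
  max_eq_left (by linarith)

theorem div_two_pow_succ_le_half {ε : ℝ} (hε : 0 ≤ ε) {j k : ℕ} (h : j < k) :
    ε / 2 ^ (k + 1) ≤ ε / 2 ^ (j + 1) / 2 := by
  rw [div_div, ← pow_succ]
  exact div_le_div_of_nonneg_left hε (by positivity) (pow_le_pow_right₀ one_le_two (by omega))

noncomputable def dyadicTent (ε : ℝ) (k : ℕ) : ℝ → ℝ :=
  tent (ε / 2 ^ (k + 1)) (ε / 2 ^ (k + 1) / 2)

theorem dyadicTent_center {ε : ℝ} (hε : 0 < ε) (k : ℕ) :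
    dyadicTent ε k (ε / 2 ^ (k + 1)) ≠ 0 := by
  rw [dyadicTent, tent_self (by positivity)]
  positivity

theorem dyadicTent_center_of_ne {ε : ℝ} (hε : 0 ≤ ε) {j k : ℕ} (hjk : j ≠ k) :
    dyadicTent ε j (ε / 2 ^ (k + 1)) = 0 := by
  have hj : 0 ≤ ε / 2 ^ (j + 1) := by positivity
  apply tent_eq_zero
  rcases lt_or_gt_of_ne hjk with h | h
  · have := div_two_pow_succ_le_half hε h
    rw [abs_sub_comm]; exact le_abs.mpr (Or.inl (by linarith))
  · have := div_two_pow_succ_le_half hε h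
    exact le_abs.mpr (Or.inl (by linarith))

theorem dyadicTent_of_le {ε x : ℝ} (hε : 0 ≤ ε) (k : ℕ) (hx : ε ≤ x) : dyadicTent ε k x = 0 := by
  have : ε / 2 ^ (k + 1) ≤ ε / 2 :=
    div_le_div_of_nonneg_left hε two_pos (le_self_pow₀ one_le_two (by omega))
  exact tent_eq_zero (le_abs.mpr (Or.inl (by linarith)))

theorem stmt13_general (n : ℕ) [NeZero n] (b : Fin n → ℂ)
    (Q : ℝ → Matrix (Fin n) (Fin n) ℂ)
    (hQint : ∀ i j, IntervalIntegrable (fun x => Q x i j) volume 0 1)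
    (C D : Matrix (Fin n) (Fin n) ℂ)
    (hC1 : C 0 0 = 1) (hC2 : ∀ k : Fin n, k ≠ 0 → C 0 k = 0) (hD : ∀ k : Fin n, D 0 k = 0)
    (ε : ℝ) (hε : 0 < ε) (hε1 : ε ≤ 1)
    (hQ : ∀ x ∈ Set.Icc (0:ℝ) ε, ∀ j : Fin n, j ≠ 0 → Q x 0 j = 0) :
    (∀ u : ℝ → Fin n → ℂ, IsRootFunction b Q C D u →
        ∀ x ∈ Set.Icc (0:ℝ) ε, u x 0 = 0)
    ∧
    (∀ f : ℝ → Fin n → ℂ, IntervalIntegrable f volume 0 1 →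
        (∀ x : ℝ, ∀ j : Fin n, j ≠ 0 → f x j = 0) →
        (∀ x ∈ Set.Icc ε (1:ℝ), f x 0 = 0) →
        ∀ u : ℝ → Fin n → ℂ, IsRootFunction b Q C D u →
          (∫ x in (0:ℝ)..1, star (f x) ⬝ᵥ u x) = 0)
    ∧
    (∃ F : ℕ → ℝ → Fin n → ℂ, LinearIndependent ℂ F ∧
      ∀ k : ℕ, Continuous (F k) ∧
        ∀ u : ℝ → Fin n → ℂ, IsRootFunction b Q C D u →
          (∫ x in (0:ℝ)..1, star (F k x) ⬝ᵥ u x) = 0) := by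
  have hQ00 : IntervalIntegrable (fun x => Q x 0 0) volume 0 ε :=
    (hQint 0 0).mono_set (uIcc_subset_uIcc left_mem_uIcc (mem_uIcc_of_le hε.le hε1))
  have vanish : ∀ u, IsRootFunction b Q C D u → ∀ x ∈ Icc 0 ε, u x 0 = 0 :=
    fun u hu => hu.apply_eq_zero hQ00 hQ hC1 hC2 hD
  have orth : ∀ f : ℝ → Fin n → ℂ, (∀ x, ∀ j, j ≠ 0 → f x j = 0) →
      (∀ x ∈ Icc ε 1, f x 0 = 0) → ∀ u, IsRootFunction b Q C D u →
        ∫ x in (0:ℝ)..1, star (f x) ⬝ᵥ u x = 0 :=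
    fun f hf hfε u hu => intervalIntegral.integral_star_dotProduct_eq_zero zero_le_one hf hfε
      (vanish u hu)
  refine ⟨vanish, fun f _ => orth f, fun k x => Pi.single 0 (dyadicTent ε k x : ℂ), ?_,
    fun k => ⟨?_, orth _ (fun x j hj => Pi.single_eq_of_ne hj _) fun x hx => ?_⟩⟩
  · refine linearIndependent_of_apply_eq_zero_of_ne (fun k => ε / 2 ^ (k + 1))
      (fun k => by simpa using dyadicTent_center hε k) fun j k hjk => ?_
    simp [dyadicTent_center_of_ne hε.le hjk]
  · exact (continuous_single 0).comp (Complex.continuous_ofReal.comp (continuous_tent _ _))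
  · simp [dyadicTent_of_le hε.le k hx.1]

/-- Corollary `cor:y1(0)=0`(ii): if the first boundary condition is
`y₁(0) = 0` and `q_{1j} ≡ 0` on `[0,ε]` for `j ≥ 2`, then the first component of every
root function vanishes on `[0,ε]`; consequently every `f = (f₁,0,…,0)` with `f₁`
supported in `[0,ε]` is orthogonal to all root functions, and the closed linear span of
the root functions has infinite codimension in `L²([0,1];ℂⁿ)`. -/
theorem stmt13 (n : ℕ) [NeZero n] (b : Fin n → ℂ) (hb : ∀ j, b j ≠ 0)
    (Q : ℝ → Matrix (Fin n) (Fin n) ℂ)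
    (hQint : ∀ i j, IntervalIntegrable (fun x => Q x i j) volume 0 1)
    (C D : Matrix (Fin n) (Fin n) ℂ)
    (hC1 : C 0 0 = 1) (hC2 : ∀ k : Fin n, k ≠ 0 → C 0 k = 0) (hD : ∀ k : Fin n, D 0 k = 0)
    (ε : ℝ) (hε : 0 < ε) (hε1 : ε ≤ 1)
    (hQ : ∀ x ∈ Set.Icc (0:ℝ) ε, ∀ j : Fin n, j ≠ 0 → Q x 0 j = 0) :
    (∀ u : ℝ → Fin n → ℂ, IsRootFunction b Q C D u →
        ∀ x ∈ Set.Icc (0:ℝ) ε, u x 0 = 0)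
    ∧
    (∀ f : ℝ → Fin n → ℂ, IntervalIntegrable f volume 0 1 →
        (∀ x : ℝ, ∀ j : Fin n, j ≠ 0 → f x j = 0) →
        (∀ x ∈ Set.Icc ε (1:ℝ), f x 0 = 0) →
        ∀ u : ℝ → Fin n → ℂ, IsRootFunction b Q C D u →
          (∫ x in (0:ℝ)..1, star (f x) ⬝ᵥ u x) = 0)
    ∧
    (∃ F : ℕ → ℝ → Fin n → ℂ, LinearIndependent ℂ F ∧
      ∀ k : ℕ, Continuous (F k) ∧
        ∀ u : ℝ → Fin n → ℂ, IsRootFunction b Q C D u →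
          (∫ x in (0:ℝ)..1, star (F k x) ⬝ᵥ u x) = 0) :=
  stmt13_general n b Q hQint C D hC1 hC2 hD ε hε hε1 hQ
end
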